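/- arXiv:2409.20546 — 4 statements merged into one kernel-verified Lean document; each statement's English description precedes it below -/
import Mathlib

section
/- Let X ~ BG(α₁, p₁, α₂, p₂) and let ν_bg(du) = (p₁/u · e^{-α₁ u} 1_{(0,∞)}(u) - p₂/u · e^{-α₂|u|} 1_{(-∞,0)}(u)) du be its Lévy measure. Then for every Schwartz function f, E[ X f(X) - ∫_ℝ f(X+u) u ν_bg(du) ] = 0. -/
/-!
Write `X = X₁ - X₂`. On `(0, ∞)` the measure `u ν_bg(du)` is `p₁ e^{-α₁u} du` and on `(-∞, 0)`
it is `-p₂ e^{α₂u} du`, so the identity splits into two instances of the Stein identity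
`E[Y g(Y)] = a E[∫₀^∞ g(Y + u) e^{-ru} du]` for `Y ~ Γ(a, r)`, applied for fixed values of the other
variable with `g = f(· - X₂)` and `g = f(X₁ - ·)`. The gamma identity itself holds because
`x γ_{a,r}(x) = (a/r) γ_{a+1,r}(x)` and `γ_{a+1,r}` is the convolution of `γ_{a,r}` with the
`Exp(r)` density.
-/

open MeasureTheory ProbabilityTheory Real Set

/-- Density (with respect to Lebesgue measure) of the Lévy measure of the bilateral gamma
distribution `BG(α₁, p₁, α₂, p₂)`:
`ν_bg(du) = (p₁/u e^{-α₁u} 1_{(0,∞)}(u) - p₂/u e^{-α₂|u|} 1_{(-∞,0)}(u)) du`. -/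
noncomputable def bgLevyDensity (α₁ p₁ α₂ p₂ : ℝ) (u : ℝ) : ℝ :=
  if 0 < u then p₁ / u * Real.exp (-α₁ * u)
  else if u < 0 then -(p₂ / u * Real.exp (-α₂ * |u|))
  else 0

theorem integral_mul_integral_add_eq_integral_mul_integral_sub {μ : Measure ℝ} [SFinite μ]
    {φ ψ g : ℝ → ℝ} {C : ℝ} (hφ : Integrable φ) (hψ : Integrable ψ μ) (hg : Measurable g)
    (hgC : ∀ x, |g x| ≤ C) :
    ∫ x, φ x * ∫ u, g (x + u) * ψ u ∂μ = ∫ t, g t * ∫ u, φ (t - u) * ψ u ∂μ := by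
  set F : ℝ × ℝ → ℝ := fun p => φ p.2 * (g (p.1 + p.2) * ψ p.1)
  set G : ℝ × ℝ → ℝ := fun p => g p.2 * (φ (p.2 - p.1) * ψ p.1)
  have hshear := measurePreserving_prod_add μ (volume : Measure ℝ)
  have hemb : MeasurableEmbedding fun p : ℝ × ℝ => (p.1, p.1 + p.2) :=
    (Homeomorph.shearAddRight ℝ).measurableEmbedding
  have hFG : F = G ∘ fun p => (p.1, p.1 + p.2) := by
    ext p; simp only [F, G, Function.comp_apply, add_sub_cancel_left]; ring
  have hF : Integrable F (μ.prod volume) := by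
    refine ((hψ.norm.mul_prod hφ.norm).const_mul C).mono' ?_ (ae_of_all _ fun p => ?_)
    · exact hφ.1.comp_snd.mul ((hg.comp measurable_add).aestronglyMeasurable.mul hψ.1.comp_fst)
    · simp only [F, norm_mul, Real.norm_eq_abs]
      nlinarith [hgC (p.1 + p.2), mul_nonneg (abs_nonneg (φ p.2)) (abs_nonneg (ψ p.1))]
  have hG : Integrable G (μ.prod volume) := (hshear.integrable_comp_emb hemb).mp (hFG ▸ hF)
  calc ∫ x, φ x * ∫ u, g (x + u) * ψ u ∂μ = ∫ x, ∫ u, F (u, x) ∂μ := by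
        simp only [F, integral_const_mul, add_comm]
    _ = ∫ p, F p ∂(μ.prod volume) := (integral_prod_symm F hF).symm
    _ = ∫ p, G p ∂(μ.prod volume) := by rw [hFG]; exact hshear.integral_comp hemb G
    _ = ∫ t, ∫ u, G (u, t) ∂μ := integral_prod_symm G hG
    _ = ∫ t, g t * ∫ u, φ (t - u) * ψ u ∂μ := by simp only [G, integral_const_mul]

namespace ProbabilityTheory

variable {a r : ℝ}

lemma gammaPDFReal_of_neg {x : ℝ} (hx : x < 0) : gammaPDFReal a r x = 0 :=
  if_neg hx.not_ge

lemma integrable_gammaPDFReal (ha : 0 < a) (hr : 0 < r) : Integrable (gammaPDFReal a r) := by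
  refine ⟨(measurable_gammaPDFReal a r).aestronglyMeasurable, ?_⟩
  rw [hasFiniteIntegral_iff_ofReal (ae_of_all _ (gammaPDFReal_nonneg ha hr))]
  exact (lintegral_gammaPDF_eq_one ha hr).trans_lt ENNReal.one_lt_top

lemma mul_gammaPDFReal (ha : 0 < a) (hr : 0 < r) (x : ℝ) :
    x * gammaPDFReal a r x = a / r * gammaPDFReal (a + 1) r x := by
  rcases lt_or_ge x 0 with hx | hx
  · simp [gammaPDFReal_of_neg hx]
  · simp only [gammaPDFReal, if_pos hx, Real.Gamma_add_one ha.ne', add_sub_cancel_right,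
      Real.rpow_add_one hr.ne']
    rcases hx.eq_or_lt with rfl | hx
    · simp [Real.zero_rpow ha.ne']
    · rw [show a = (a - 1) + 1 by ring, Real.rpow_add_one hx.ne', sub_add_cancel]
      have := (Real.Gamma_pos_of_pos ha).ne'
      field_simp

lemma integral_gammaMeasure (ha : 0 < a) (hr : 0 < r) (g : ℝ → ℝ) :
    ∫ x, g x ∂gammaMeasure a r = ∫ x, gammaPDFReal a r x * g x := by
  rw [gammaMeasure, integral_withDensity_eq_integral_toReal_smul (f := gammaPDF a r)
    (measurable_gammaPDFReal a r).ennreal_ofReal (ae_of_all _ fun _ => ENNReal.ofReal_lt_top)]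
  simp [gammaPDF, ENNReal.toReal_ofReal (gammaPDFReal_nonneg ha hr _)]

lemma integrable_gammaMeasure_iff (ha : 0 < a) (hr : 0 < r) {g : ℝ → ℝ} :
    Integrable g (gammaMeasure a r) ↔ Integrable (fun x => gammaPDFReal a r x * g x) := by
  rw [gammaMeasure, integrable_withDensity_iff_integrable_smul' (f := gammaPDF a r)
    (measurable_gammaPDFReal a r).ennreal_ofReal (ae_of_all _ fun _ => ENNReal.ofReal_lt_top)]
  simp [gammaPDF, ENNReal.toReal_ofReal (gammaPDFReal_nonneg ha hr _)]

lemma integrable_id_gammaMeasure (ha : 0 < a) (hr : 0 < r) :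
    Integrable (fun x => x) (gammaMeasure a r) := by
  rw [integrable_gammaMeasure_iff ha hr]
  simp_rw [mul_comm (gammaPDFReal a r _), mul_gammaPDFReal ha hr]
  exact (integrable_gammaPDFReal (by linarith) hr).const_mul _

lemma integral_Ioi_gammaPDFReal_sub_mul_exp (ha : 0 < a) (hr : 0 < r) (t : ℝ) :
    ∫ u in Ioi 0, gammaPDFReal a r (t - u) * exp (-r * u) = gammaPDFReal (a + 1) r t / r := by
  rcases lt_or_ge t 0 with ht | ht
  · rw [gammaPDFReal_of_neg ht, zero_div]
    refine setIntegral_eq_zero_of_forall_eq_zero fun u hu => ?_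
    rw [gammaPDFReal_of_neg (by linarith [mem_Ioi.mp hu]), zero_mul]
  have hvanish : ∀ u ∈ Ioi 0 \ Ioc 0 t, gammaPDFReal a r (t - u) * exp (-r * u) = 0 := by
    rintro u ⟨hu₀, hut⟩
    rw [gammaPDFReal_of_neg (by simp_all), zero_mul]
  have hIoc : ∀ u ∈ Ioc 0 t, gammaPDFReal a r (t - u) * exp (-r * u)
      = r ^ a / Real.Gamma a * exp (-(r * t)) * (t - u) ^ (a - 1) := by
    rintro u ⟨-, hut⟩
    rw [gammaPDFReal, if_pos (sub_nonneg.mpr hut), mul_right_comm, mul_assoc, ← Real.exp_add]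
    ring_nf
  rw [setIntegral_eq_of_subset_of_forall_sdiff_eq_zero measurableSet_Ioi Ioc_subset_Ioi_self
      hvanish, setIntegral_congr_fun measurableSet_Ioc hIoc, integral_const_mul,
    ← intervalIntegral.integral_of_le ht,
    intervalIntegral.integral_comp_sub_left (fun v => v ^ (a - 1)), sub_self, sub_zero,
    integral_rpow (Or.inl (by linarith)), sub_add_cancel, Real.zero_rpow ha.ne',
    gammaPDFReal, if_pos ht, Real.Gamma_add_one ha.ne', add_sub_cancel_right,
    Real.rpow_add_one hr.ne']
  have := (Real.Gamma_pos_of_pos ha).ne'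
  field_simp
  ring

lemma abs_integral_Ioi_mul_exp_le {g : ℝ → ℝ} {C : ℝ} (hr : 0 < r) (hgC : ∀ x, |g x| ≤ C) :
    |∫ u in Ioi 0, g u * exp (-r * u)| ≤ C / r := by
  have hbound : ∫ u in Ioi 0, C * exp (-r * u) = C / r := by
    rw [integral_const_mul, integral_exp_mul_Ioi (by linarith) 0]
    field_simp
    simp
  rw [← Real.norm_eq_abs, ← hbound]
  refine norm_integral_le_of_norm_le ((exp_neg_integrableOn_Ioi 0 hr).const_mul C)
    (ae_of_all _ fun u => ?_)
  rw [norm_mul, Real.norm_of_nonneg (exp_pos _).le]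
  exact mul_le_mul_of_nonneg_right (hgC u) (exp_pos _).le

lemma measurable_integral_Ioi_mul_exp {α : Type*} [MeasurableSpace α] {h : α → ℝ → ℝ}
    (hh : Measurable (Function.uncurry h)) :
    Measurable fun x => ∫ u in Ioi 0, h x u * exp (-r * u) :=
  (hh.mul (measurable_snd.const_mul (-r)).exp).stronglyMeasurable.integral_prod_right'.measurable

/-- The Stein operator `x g(x) - ∫ g(x + u) u ν(du)` of `gammaMeasure a r`, whose Lévy measure
is `ν(du) = a e^{-ru} / u du` on `(0, ∞)`. -/
noncomputable def gammaSteinOp (a r : ℝ) (g : ℝ → ℝ) (x : ℝ) : ℝ :=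
  x * g x - a * ∫ u in Ioi 0, g (x + u) * exp (-r * u)

theorem integral_gammaSteinOp_gammaMeasure {g : ℝ → ℝ} {C : ℝ} (ha : 0 < a) (hr : 0 < r)
    (hg : Measurable g) (hgC : ∀ x, |g x| ≤ C) :
    ∫ x, gammaSteinOp a r g x ∂gammaMeasure a r = 0 := by
  have : IsProbabilityMeasure (gammaMeasure a r) := isProbabilityMeasure_gammaMeasure ha hr
  have hmul : Integrable (fun x => x * g x) (gammaMeasure a r) :=
    ((integrable_id_gammaMeasure ha hr).bdd_mul hg.aestronglyMeasurable
      (ae_of_all _ hgC)).congr (ae_of_all _ fun x => mul_comm _ _)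
  have htail : Integrable (fun x => ∫ u in Ioi 0, g (x + u) * exp (-r * u)) (gammaMeasure a r) :=
    .of_bound (measurable_integral_Ioi_mul_exp (h := fun x u => g (x + u))
      (hg.comp measurable_add)).aestronglyMeasurable (C / r)
      (ae_of_all _ fun x => abs_integral_Ioi_mul_exp_le hr fun u => hgC (x + u))
  have hmul_eq : ∫ x, x * g x ∂gammaMeasure a r
      = a / r * ∫ t, g t * gammaPDFReal (a + 1) r t := by
    rw [integral_gammaMeasure ha hr, ← integral_const_mul]
    refine integral_congr_ae (ae_of_all _ fun x => ?_)
    linear_combination g x * mul_gammaPDFReal ha hr x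
  have htail_eq : ∫ x, (∫ u in Ioi 0, g (x + u) * exp (-r * u)) ∂gammaMeasure a r
      = (∫ t, g t * gammaPDFReal (a + 1) r t) / r := by
    rw [integral_gammaMeasure ha hr, integral_mul_integral_add_eq_integral_mul_integral_sub
      (integrable_gammaPDFReal ha hr) (exp_neg_integrableOn_Ioi 0 hr) hg hgC]
    simp_rw [integral_Ioi_gammaPDFReal_sub_mul_exp ha hr, mul_div_assoc']
    exact integral_div r _
  simp only [gammaSteinOp]
  rw [integral_sub hmul (htail.const_mul a), integral_const_mul, hmul_eq, htail_eq]
  ring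

section Product

variable {h : ℝ × ℝ → ℝ} {C : ℝ}

lemma measurable_gammaSteinOp_prod (hh : Measurable h) :
    Measurable fun z : ℝ × ℝ => gammaSteinOp a r (fun x => h (x, z.2)) z.1 :=
  (measurable_fst.mul hh).sub <| (measurable_integral_Ioi_mul_exp
    (h := fun (z : ℝ × ℝ) u => h (z.1 + u, z.2)) (by fun_prop)).const_mul a

lemma integrable_gammaSteinOp_prod (ha : 0 < a) (hr : 0 < r) (ν : Measure ℝ)
    [IsFiniteMeasure ν] (hh : Measurable h) (hC : ∀ z, |h z| ≤ C) :
    Integrable (fun z : ℝ × ℝ => gammaSteinOp a r (fun x => h (x, z.2)) z.1)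
      ((gammaMeasure a r).prod ν) := by
  have : IsProbabilityMeasure (gammaMeasure a r) := isProbabilityMeasure_gammaMeasure ha hr
  have hdom : Integrable (fun z : ℝ × ℝ => C * |z.1| + a * (C / r)) ((gammaMeasure a r).prod ν) :=
    (((integrable_id_gammaMeasure ha hr).abs.comp_fst ν).const_mul C).add (integrable_const _)
  refine hdom.mono' (measurable_gammaSteinOp_prod hh).aestronglyMeasurable
    (ae_of_all _ fun z => ?_)
  have htail := abs_integral_Ioi_mul_exp_le hr fun u => hC (z.1 + u, z.2)
  rw [Real.norm_eq_abs, gammaSteinOp]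
  calc _ ≤ |z.1 * h z| + |a * ∫ u in Ioi 0, h (z.1 + u, z.2) * exp (-r * u)| := abs_sub _ _
    _ ≤ C * |z.1| + a * (C / r) := by
      rw [abs_mul, abs_mul, abs_of_pos ha]
      nlinarith [hC z, abs_nonneg z.1]

lemma integral_gammaSteinOp_prod (ha : 0 < a) (hr : 0 < r) (ν : Measure ℝ)
    [IsFiniteMeasure ν] (hh : Measurable h) (hC : ∀ z, |h z| ≤ C) :
    ∫ z, gammaSteinOp a r (fun x => h (x, z.2)) z.1 ∂(gammaMeasure a r).prod ν = 0 := by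
  have : IsProbabilityMeasure (gammaMeasure a r) := isProbabilityMeasure_gammaMeasure ha hr
  rw [integral_prod_symm _ (integrable_gammaSteinOp_prod ha hr ν hh hC)]
  refine integral_eq_zero_of_ae (ae_of_all _ fun y => ?_)
  exact integral_gammaSteinOp_gammaMeasure ha hr (hh.comp (measurable_id.prodMk measurable_const))
    fun x => hC (x, y)

end Product

section IndepFun

variable {Ω : Type*} [MeasurableSpace Ω] {P : Measure Ω} [IsFiniteMeasure P] {X Y : Ω → ℝ}
  {h : ℝ × ℝ → ℝ} {C : ℝ}

theorem integrable_gammaSteinOp_of_indepFun (ha : 0 < a) (hr : 0 < r) (hX : Measurable X)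
    (hY : Measurable Y) (hXY : IndepFun X Y P) (hlaw : P.map X = gammaMeasure a r)
    (hh : Measurable h) (hC : ∀ z, |h z| ≤ C) :
    Integrable (fun ω => gammaSteinOp a r (fun x => h (x, Y ω)) (X ω)) P := by
  have hint := integrable_gammaSteinOp_prod ha hr (P.map Y) hh hC
  rw [← hlaw, ← (indepFun_iff_map_prod_eq_prod_map_map hX.aemeasurable hY.aemeasurable).mp hXY]
    at hint
  exact hint.comp_measurable (hX.prodMk hY)

theorem integral_gammaSteinOp_of_indepFun (ha : 0 < a) (hr : 0 < r) (hX : Measurable X)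
    (hY : Measurable Y) (hXY : IndepFun X Y P) (hlaw : P.map X = gammaMeasure a r)
    (hh : Measurable h) (hC : ∀ z, |h z| ≤ C) :
    ∫ ω, gammaSteinOp a r (fun x => h (x, Y ω)) (X ω) ∂P = 0 := by
  have hint := integral_gammaSteinOp_prod ha hr (P.map Y) hh hC
  rwa [← hlaw, ← (indepFun_iff_map_prod_eq_prod_map_map hX.aemeasurable hY.aemeasurable).mp hXY,
    integral_map (hX.prodMk hY).aemeasurable
      (measurable_gammaSteinOp_prod hh).aestronglyMeasurable] at hint

end IndepFun

end ProbabilityTheory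

section BilateralGamma

variable {α₁ p₁ α₂ p₂ : ℝ}

lemma mul_bgLevyDensity (u : ℝ) :
    u * bgLevyDensity α₁ p₁ α₂ p₂ u = (Ioi 0).indicator (fun u => p₁ * exp (-α₁ * u)) u
      - (Iio 0).indicator (fun u => p₂ * exp (α₂ * u)) u := by
  rcases lt_trichotomy u 0 with hu | rfl | hu
  · simp [bgLevyDensity, hu, hu.not_gt, abs_of_neg hu]
    field_simp [hu.ne]
  · simp [bgLevyDensity]
  · simp [bgLevyDensity, hu, hu.not_gt]
    field_simp

lemma integral_mul_mul_bgLevyDensity {f : ℝ → ℝ} {C : ℝ} (hα₁ : 0 < α₁) (hα₂ : 0 < α₂)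
    (hf : Measurable f) (hfC : ∀ x, |f x| ≤ C) (s : ℝ) :
    ∫ u, f (s + u) * (u * bgLevyDensity α₁ p₁ α₂ p₂ u)
      = p₁ * (∫ u in Ioi 0, f (s + u) * exp (-α₁ * u))
        - p₂ * ∫ u in Ioi 0, f (s - u) * exp (-α₂ * u) := by
  have hfs : Measurable fun u => f (s + u) := hf.comp (measurable_const_add s)
  have hpos : IntegrableOn (fun u => f (s + u) * (p₁ * exp (-α₁ * u))) (Ioi 0) :=
    ((exp_neg_integrableOn_Ioi 0 hα₁).const_mul p₁).bdd_mul hfs.aestronglyMeasurable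
      (ae_of_all _ fun u => hfC _)
  have hneg : IntegrableOn (fun u => f (s + u) * (p₂ * exp (α₂ * u))) (Iio 0) :=
    (((integrableOn_exp_mul_Iic hα₂ 0).mono_set Iio_subset_Iic_self).const_mul p₂).bdd_mul
      hfs.aestronglyMeasurable (ae_of_all _ fun u => hfC _)
  have hreflect := integral_comp_neg_Ioi 0 fun u => f (s + u) * (p₂ * exp (α₂ * u))
  simp only [neg_zero] at hreflect
  have hsplit (u : ℝ) : f (s + u) * (u * bgLevyDensity α₁ p₁ α₂ p₂ u)
      = (Ioi 0).indicator (fun u => f (s + u) * (p₁ * exp (-α₁ * u))) u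
        - (Iio 0).indicator (fun u => f (s + u) * (p₂ * exp (α₂ * u))) u := by
    simp only [mul_bgLevyDensity, indicator_apply]
    split_ifs <;> ring
  rw [integral_congr_ae (ae_of_all _ hsplit),
    integral_sub (hpos.integrable_indicator measurableSet_Ioi)
      (hneg.integrable_indicator measurableSet_Iio), integral_indicator measurableSet_Ioi,
    integral_indicator measurableSet_Iio, ← integral_Iic_eq_integral_Iio, ← hreflect]
  simp_rw [mul_left_comm _ p₁, mul_left_comm _ p₂, integral_const_mul, ← sub_eq_add_neg, mul_neg,
    neg_mul]

end BilateralGamma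

/-- **Stein identity for the bilateral gamma distribution.**
If `X ~ BG(α₁, p₁, α₂, p₂)` (realized as `X = X₁ - X₂` with independent gamma variables)
then for every Schwartz function `f`,
`E[X f(X) - ∫_ℝ f(X+u) u ν_bg(du)] = 0`. -/
theorem bilateral_gamma_stein_identity {Ω : Type*} [MeasurableSpace Ω]
    (P : Measure Ω) [IsProbabilityMeasure P]
    (X₁ X₂ : Ω → ℝ) (hX₁ : Measurable X₁) (hX₂ : Measurable X₂)
    (α₁ α₂ p₁ p₂ : ℝ) (hα₁ : 0 < α₁) (hα₂ : 0 < α₂) (hp₁ : 0 < p₁) (hp₂ : 0 < p₂)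
    (hindep : IndepFun X₁ X₂ P)
    (hlaw₁ : P.map X₁ = gammaMeasure p₁ α₁)
    (hlaw₂ : P.map X₂ = gammaMeasure p₂ α₂)
    (f : SchwartzMap ℝ ℝ) :
    ∫ ω, ((X₁ ω - X₂ ω) * f (X₁ ω - X₂ ω)
        - ∫ u : ℝ, f (X₁ ω - X₂ ω + u) * (u * bgLevyDensity α₁ p₁ α₂ p₂ u)) ∂P = 0 := by
  have hf : Measurable f := f.continuous.measurable
  have hfC (x : ℝ) : |f x| ≤ ‖f.toBoundedContinuousFunction‖ :=
    f.toBoundedContinuousFunction.norm_coe_le_norm x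
  have hh₁ : Measurable fun z : ℝ × ℝ => f (z.1 - z.2) := hf.comp measurable_sub
  have hh₂ : Measurable fun z : ℝ × ℝ => f (z.2 - z.1) :=
    hf.comp (measurable_snd.sub measurable_fst)
  have hsplit (ω : Ω) : (X₁ ω - X₂ ω) * f (X₁ ω - X₂ ω)
      - ∫ u : ℝ, f (X₁ ω - X₂ ω + u) * (u * bgLevyDensity α₁ p₁ α₂ p₂ u)
      = gammaSteinOp p₁ α₁ (fun x => f (x - X₂ ω)) (X₁ ω)
        - gammaSteinOp p₂ α₂ (fun y => f (X₁ ω - y)) (X₂ ω) := by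
    rw [integral_mul_mul_bgLevyDensity hα₁ hα₂ hf hfC]
    simp only [gammaSteinOp, ← sub_add_eq_add_sub, ← sub_sub]
    ring
  have hint₁ : Integrable (fun ω => gammaSteinOp p₁ α₁ (fun x => f (x - X₂ ω)) (X₁ ω)) P :=
    integrable_gammaSteinOp_of_indepFun hp₁ hα₁ hX₁ hX₂ hindep hlaw₁ hh₁ fun _ => hfC _
  have hint₂ : Integrable (fun ω => gammaSteinOp p₂ α₂ (fun y => f (X₁ ω - y)) (X₂ ω)) P :=
    integrable_gammaSteinOp_of_indepFun hp₂ hα₂ hX₂ hX₁ hindep.symm hlaw₂ hh₂ fun _ => hfC _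
  simp_rw [hsplit]
  rw [integral_sub hint₁ hint₂,
    integral_gammaSteinOp_of_indepFun hp₁ hα₁ hX₁ hX₂ hindep hlaw₁ hh₁ fun _ => hfC _,
    integral_gammaSteinOp_of_indepFun hp₂ hα₂ hX₂ hX₁ hindep.symm hlaw₂ hh₂ fun _ => hfC _,
    sub_zero]
end

section
/- Let φ_bg be the characteristic function of a bilateral gamma BG(α₁, p₁, α₂, p₂) distribution and let ν_bg be its Lévy measure. Then φ_bg is differentiable and φ_bg′(z) = i φ_bg(z) ∫_ℝ u e^{izu} ν_bg(du) for all z ∈ ℝ. -/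
open MeasureTheory

/-- Characteristic function of the bilateral gamma distribution `BG(α₁, p₁, α₂, p₂)`. -/
noncomputable def bgCharFun (α₁ p₁ α₂ p₂ : ℝ) (z : ℝ) : ℂ :=
  ((α₁ : ℂ) / (α₁ - z * Complex.I)) ^ (p₁ : ℂ)
    * ((α₂ : ℂ) / (α₂ + z * Complex.I)) ^ (p₂ : ℂ)

/-!
On each half-line `u ν_bg(du)` is an exponential density, so
`∫ u e^{izu} ν_bg(du) = p₁ / (α₁ - iz) - p₂ / (α₂ + iz)`. This is `-i` times the logarithmic
derivative of `φ_bg`, computed factor by factor with the chain rule for the principal power: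
both bases `α / (α ∓ iz)` have positive real part, so they stay in the slit plane.
-/

open Set Complex

section LevyIntegral

variable (α₁ p₁ α₂ p₂ : ℝ)

lemma mul_bgLevyDensity_of_pos {u : ℝ} (hu : 0 < u) :
    u * bgLevyDensity α₁ p₁ α₂ p₂ u = p₁ * Real.exp (-α₁ * u) := by
  rw [bgLevyDensity, if_pos hu]
  field_simp [hu.ne']

lemma mul_bgLevyDensity_of_neg {u : ℝ} (hu : u < 0) :
    u * bgLevyDensity α₁ p₁ α₂ p₂ u = -(p₂ * Real.exp (α₂ * u)) := by
  rw [bgLevyDensity, if_neg hu.not_gt, if_pos hu, abs_of_neg hu, neg_mul_neg]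
  field_simp [hu.ne]

lemma integral_mul_cexp_mul_bgLevyDensity (hα₁ : 0 < α₁) (hα₂ : 0 < α₂) (z : ℝ) :
    ∫ u : ℝ, (u : ℂ) * exp (I * z * u) * (bgLevyDensity α₁ p₁ α₂ p₂ u : ℝ)
      = p₁ / (α₁ - z * I) - p₂ / (α₂ + z * I) := by
  set f : ℝ → ℂ := fun u => (u : ℂ) * exp (I * z * u) * (bgLevyDensity α₁ p₁ α₂ p₂ u : ℝ)
  have hre₁ : (I * z - α₁).re < 0 := by simpa using hα₁
  have hre₂ : 0 < (I * z + α₂).re := by simpa using hα₂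
  have hf (u : ℝ) : f u = exp (I * z * u) * ((u * bgLevyDensity α₁ p₁ α₂ p₂ u : ℝ) : ℂ) := by
    simp only [f]
    push_cast
    ring
  have on_Ioi : EqOn f (fun u : ℝ => p₁ * exp ((I * z - α₁) * u)) (Ioi 0) := by
    intro u (hu : 0 < u)
    rw [hf, mul_bgLevyDensity_of_pos α₁ p₁ α₂ p₂ hu]
    push_cast
    rw [sub_mul, sub_eq_add_neg, ← neg_mul, exp_add]
    ring
  have on_Iio : EqOn f (fun u : ℝ => -p₂ * exp ((I * z + α₂) * u)) (Iio 0) := by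
    intro u (hu : u < 0)
    rw [hf, mul_bgLevyDensity_of_neg α₁ p₁ α₂ p₂ hu]
    push_cast
    rw [add_mul, exp_add]
    ring
  have int_Ioi : IntegrableOn f (Ioi 0) :=
    IntegrableOn.congr_fun ((integrableOn_exp_mul_complex_Ioi hre₁ 0).const_mul _) on_Ioi.symm
      measurableSet_Ioi
  have int_Iic : IntegrableOn f (Iic 0) :=
    (integrableOn_Iic_iff_integrableOn_Iio).mpr <| IntegrableOn.congr_fun
      (((integrableOn_exp_mul_complex_Iic hre₂ 0).mono_set Iio_subset_Iic_self).const_mul _)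
      on_Iio.symm measurableSet_Iio
  rw [← intervalIntegral.integral_Iic_add_Ioi int_Iic int_Ioi, integral_Iic_eq_integral_Iio,
    setIntegral_congr_fun measurableSet_Iio on_Iio, setIntegral_congr_fun measurableSet_Ioi on_Ioi,
    integral_const_mul, integral_const_mul, ← integral_Iic_eq_integral_Iio,
    integral_exp_mul_complex_Iic hre₂, integral_exp_mul_complex_Ioi hre₁]
  have h₁ : (α₁ : ℂ) - z * I = -(I * z - α₁) := by ring
  have h₂ : (α₂ : ℂ) + z * I = I * z + α₂ := by ring
  rw [h₁, h₂]
  simp only [ofReal_zero, mul_zero, exp_zero, div_neg]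
  ring

end LevyIntegral

lemma hasDerivAt_ofReal_div_sub_mul_cpow {α : ℝ} (hα : 0 < α) {j : ℂ} (hj : j.re = 0)
    (p : ℂ) (z : ℝ) :
    HasDerivAt (fun t : ℝ => ((α : ℂ) / (α - t * j)) ^ p)
      (((α : ℂ) / (α - z * j)) ^ p * (p * j / (α - z * j))) z := by
  have hre : ((α : ℂ) - z * j).re = α := by simp [hj]
  have hden : (α : ℂ) - z * j ≠ 0 := fun h => by simp [h, hα.ne] at hre
  have hquot : HasDerivAt (fun w : ℂ => (α : ℂ) / (α - w * j)) (α * j / (α - z * j) ^ 2) z := by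
    have hlin : HasDerivAt (fun w : ℂ => (α : ℂ) - w * j) (-j) z := by
      simpa using ((hasDerivAt_id (z : ℂ)).mul_const j).const_sub (α : ℂ)
    exact ((hasDerivAt_const (z : ℂ) (α : ℂ)).div hlin hden).congr_deriv (by ring)
  have hslit : (α : ℂ) / (α - z * j) ∈ slitPlane := by
    refine Or.inl ?_
    rw [div_re, hre, ofReal_re, ofReal_im, zero_mul, zero_div, add_zero]
    exact div_pos (mul_pos hα hα) (normSq_pos.mpr hden)
  have hα' : (α : ℂ) ≠ 0 := ofReal_ne_zero.mpr hα.ne'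
  have hne : (α : ℂ) / (α - z * j) ≠ 0 := div_ne_zero hα' hden
  convert (hquot.cpow_const hslit).comp_ofReal using 1
  rw [cpow_sub _ _ hne, cpow_one]
  field_simp

theorem bgCharFun_hasDerivAt_general (α₁ α₂ p₁ p₂ : ℝ)
    (hα₁ : 0 < α₁) (hα₂ : 0 < α₂) :
    ∀ z : ℝ,
      HasDerivAt (fun t : ℝ => bgCharFun α₁ p₁ α₂ p₂ t)
        (Complex.I * bgCharFun α₁ p₁ α₂ p₂ z *
          ∫ u : ℝ, (u : ℂ) * Complex.exp (Complex.I * z * u) * (bgLevyDensity α₁ p₁ α₂ p₂ u : ℝ))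
        z := by
  intro z
  have h₁ := hasDerivAt_ofReal_div_sub_mul_cpow hα₁ I_re p₁ z
  have h₂ := hasDerivAt_ofReal_div_sub_mul_cpow hα₂ (j := -I) (by simp) p₂ z
  simp only [mul_neg, sub_neg_eq_add] at h₂
  rw [integral_mul_cexp_mul_bgLevyDensity α₁ p₁ α₂ p₂ hα₁ hα₂]
  unfold bgCharFun
  exact (h₁.mul h₂).congr_deriv (by ring)

/-- **Derivative of the bilateral gamma characteristic function.**
`φ_bg` is differentiable with `φ_bg′(z) = i φ_bg(z) ∫_ℝ u e^{izu} ν_bg(du)` for all real `z`. -/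
theorem bgCharFun_hasDerivAt (α₁ α₂ p₁ p₂ : ℝ)
    (hα₁ : 0 < α₁) (hα₂ : 0 < α₂) (hp₁ : 0 < p₁) (hp₂ : 0 < p₂) :
    ∀ z : ℝ,
      HasDerivAt (fun t : ℝ => bgCharFun α₁ p₁ α₂ p₂ t)
        (Complex.I * bgCharFun α₁ p₁ α₂ p₂ z *
          ∫ u : ℝ, (u : ℂ) * Complex.exp (Complex.I * z * u) * (bgLevyDensity α₁ p₁ α₂ p₂ u : ℝ))
        z :=
  bgCharFun_hasDerivAt_general α₁ α₂ p₁ p₂ hα₁ hα₂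
end

section
/- Let G = I₂(f) with f ∈ H^{⊙2}. Then for all m, p ≥ 1, E[Γ_m(G) Γ_p(G)] = κ_{m+p}(G)/(m+p-1)! + κ_m(G)κ_p(G)/((m-1)!(p-1)!). -/
open MeasureTheory

/-!
Write `A = E[Γ_m]`, `B = E[Γ_p]`. The representation of the centred `Γ_j` as
`2^{j-1} I₂(f ⊗₁^{(j)} f)` and the isometry give
`E[Γ_m Γ_p] - A B = 2^{m-1} 2^{p-1} · 2 ⟨f ⊗₁^{(m)} f, f ⊗₁^{(p)} f⟩`, and the contraction identity
turns the right-hand side into `2^{m+p-1} ⟨f ⊗₁^{(m+p-1)} f, f⟩ = κ_{m+p}/(m+p-1)!`, while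
`A B = κ_m κ_p / ((m-1)!(p-1)!)`.
-/

section Centring

variable {Ω : Type*} [MeasurableSpace Ω] {μ : Measure Ω} [IsProbabilityMeasure μ] {X Y : Ω → ℝ}

theorem integral_sub_integral_mul_sub_integral (hX : Integrable X μ) (hY : Integrable Y μ)
    (hXY : Integrable (fun ω => X ω * Y ω) μ) :
    ∫ ω, (X ω - ∫ ω', X ω' ∂μ) * (Y ω - ∫ ω', Y ω' ∂μ) ∂μ
      = ∫ ω, X ω * Y ω ∂μ - (∫ ω, X ω ∂μ) * ∫ ω, Y ω ∂μ := by
  set A := ∫ ω, X ω ∂μ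
  set B := ∫ ω, Y ω ∂μ
  have hexpand : (fun ω => (X ω - A) * (Y ω - B))
      = fun ω => (X ω * Y ω - A * Y ω) - (B * X ω - A * B) := by
    funext ω; ring
  have hXY_AY : Integrable (fun ω => X ω * Y ω - A * Y ω) μ := hXY.sub (hY.const_mul A)
  have hBX_AB : Integrable (fun ω => B * X ω - A * B) μ :=
    (hX.const_mul B).sub (integrable_const _)
  rw [hexpand, integral_sub hXY_AY hBX_AB, integral_sub hXY (hY.const_mul A),
    integral_sub (hX.const_mul B) (integrable_const _), integral_const_mul, integral_const_mul,
    integral_const, probReal_univ, one_smul]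
  ring

theorem integral_mul_eq_of_sub_integral_eq_mul {U V : Ω → ℝ} {a b : ℝ}
    (hX : Integrable X μ) (hY : Integrable Y μ) (hXY : Integrable (fun ω => X ω * Y ω) μ)
    (hXU : ∀ ω, X ω - ∫ ω', X ω' ∂μ = a * U ω) (hYV : ∀ ω, Y ω - ∫ ω', Y ω' ∂μ = b * V ω) :
    ∫ ω, X ω * Y ω ∂μ = a * b * ∫ ω, U ω * V ω ∂μ + (∫ ω, X ω ∂μ) * ∫ ω, Y ω ∂μ := by
  have hscaled : ∫ ω, (X ω - ∫ ω', X ω' ∂μ) * (Y ω - ∫ ω', Y ω' ∂μ) ∂μ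
      = a * b * ∫ ω, U ω * V ω ∂μ := by
    simp_rw [hXU, hYV, mul_mul_mul_comm a, integral_const_mul]
  linarith [integral_sub_integral_mul_sub_integral hX hY hXY]

end Centring

theorem second_chaos_gamma_product_general {Ω : Type*} [MeasurableSpace Ω]
    (P : Measure Ω) [IsProbabilityMeasure P]
    {H : Type*} [NormedAddCommGroup H] [InnerProductSpace ℝ H]
    (I2 : H → Ω → ℝ) (c : ℕ → H) (Γ : ℕ → Ω → ℝ) (κ : ℕ → ℝ)
    (hintΓ : ∀ m, Integrable (Γ m) P)
    (hintΓΓ : ∀ m p, Integrable (fun ω => Γ m ω * Γ p ω) P)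
    (hIso : ∀ g h : H, ∫ ω, I2 g ω * I2 h ω ∂P = 2 * (inner ℝ g h : ℝ))
    (hRep : ∀ j : ℕ, 1 ≤ j → ∀ ω,
      I2 (c j) ω = (Γ j ω - ∫ ω', Γ j ω' ∂P) / 2 ^ (j - 1))
    (hContr : ∀ m p : ℕ, 1 ≤ m → 1 ≤ p → (inner ℝ (c m) (c p) : ℝ) = inner ℝ (c (m + p - 1)) (c 1))
    (hκΓ : ∀ m : ℕ, 1 ≤ m → κ m = (Nat.factorial (m - 1) : ℝ) * ∫ ω, Γ m ω ∂P)
    (hκc : ∀ p : ℕ, 2 ≤ p →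
      κ p = 2 ^ (p - 1) * (Nat.factorial (p - 1) : ℝ) * (inner ℝ (c (p - 1)) (c 1) : ℝ)) :
    ∀ m p : ℕ, 1 ≤ m → 1 ≤ p →
      ∫ ω, Γ m ω * Γ p ω ∂P
        = κ (m + p) / (Nat.factorial (m + p - 1) : ℝ)
          + κ m * κ p / ((Nat.factorial (m - 1) : ℝ) * (Nat.factorial (p - 1) : ℝ)) := by
  intro m p hm hp
  have hcentred (j : ℕ) (hj : 1 ≤ j) (ω : Ω) :
      Γ j ω - ∫ ω', Γ j ω' ∂P = 2 ^ (j - 1) * I2 (c j) ω := by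
    rw [hRep j hj, mul_div_cancel₀ _ (by positivity)]
  have hproduct : ∫ ω, Γ m ω * Γ p ω ∂P
      = 2 ^ (m + p - 1) * inner ℝ (c (m + p - 1)) (c 1)
        + (∫ ω, Γ m ω ∂P) * ∫ ω, Γ p ω ∂P := by
    rw [integral_mul_eq_of_sub_integral_eq_mul (hintΓ m) (hintΓ p) (hintΓΓ m p)
      (hcentred m hm) (hcentred p hp), hIso, ← hContr m p hm hp,
      show m + p - 1 = (m - 1) + (p - 1) + 1 by omega, pow_succ, pow_add]
    ring
  have hκ_mp : κ (m + p) / ((m + p - 1).factorial : ℝ)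
      = 2 ^ (m + p - 1) * inner ℝ (c (m + p - 1)) (c 1) := by
    rw [hκc (m + p) (by omega), mul_right_comm,
      mul_div_cancel_right₀ _ (by positivity)]
  have hκ_m_κ_p : κ m * κ p / (((m - 1).factorial : ℝ) * ((p - 1).factorial : ℝ))
      = (∫ ω, Γ m ω ∂P) * ∫ ω, Γ p ω ∂P := by
    rw [hκΓ m hm, hκΓ p hp]
    field_simp
  rw [hproduct, hκ_mp, hκ_m_κ_p]

/-- **Product formula for Gamma-operators on the second Wiener chaos.**
Let `G = I₂(f)`, `f ∈ H^{⊙2}`, with Gamma-operators `Γ_m` and cumulants `κ_m` satisfying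
`κ_m(G) = (m-1)! E[Γ_m(G)]`.  With `c j = f ⊗₁^{(j)} f` the iterated `1`-contractions
(`c 1 = f`), the representation `I₂(c j) = 2^{-(j-1)}(Γ_j(G) - E Γ_j(G))`, the isometry
`E[I₂(g)I₂(h)] = 2⟨g,h⟩`, the contraction identity `⟨c m, c p⟩ = ⟨c (m+p-1), c 1⟩` and
`κ_p(G) = 2^{p-1}(p-1)!⟨c (p-1), c 1⟩` hold.  Then for all `m, p ≥ 1`,
`E[Γ_m(G) Γ_p(G)] = κ_{m+p}(G)/(m+p-1)! + κ_m(G)κ_p(G)/((m-1)!(p-1)!)`. -/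
theorem second_chaos_gamma_product {Ω : Type*} [MeasurableSpace Ω]
    (P : Measure Ω) [IsProbabilityMeasure P]
    {H : Type*} [NormedAddCommGroup H] [InnerProductSpace ℝ H]
    (G : Ω → ℝ) (I2 : H → Ω → ℝ) (f : H) (c : ℕ → H) (Γ : ℕ → Ω → ℝ) (κ : ℕ → ℝ)
    (hG : G = I2 f) (hc₁ : c 1 = f)
    (hintΓ : ∀ m, Integrable (Γ m) P)
    (hintΓΓ : ∀ m p, Integrable (fun ω => Γ m ω * Γ p ω) P)
    (hIso : ∀ g h : H, ∫ ω, I2 g ω * I2 h ω ∂P = 2 * (inner ℝ g h : ℝ))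
    (hRep : ∀ j : ℕ, 1 ≤ j → ∀ ω,
      I2 (c j) ω = (Γ j ω - ∫ ω', Γ j ω' ∂P) / 2 ^ (j - 1))
    (hContr : ∀ m p : ℕ, 1 ≤ m → 1 ≤ p → (inner ℝ (c m) (c p) : ℝ) = inner ℝ (c (m + p - 1)) (c 1))
    (hκΓ : ∀ m : ℕ, 1 ≤ m → κ m = (Nat.factorial (m - 1) : ℝ) * ∫ ω, Γ m ω ∂P)
    (hκc : ∀ p : ℕ, 2 ≤ p →
      κ p = 2 ^ (p - 1) * (Nat.factorial (p - 1) : ℝ) * (inner ℝ (c (p - 1)) (c 1) : ℝ)) :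
    ∀ m p : ℕ, 1 ≤ m → 1 ≤ p →
      ∫ ω, Γ m ω * Γ p ω ∂P
        = κ (m + p) / (Nat.factorial (m + p - 1) : ℝ)
          + κ m * κ p / ((Nat.factorial (m - 1) : ℝ) * (Nat.factorial (p - 1) : ℝ)) :=
  second_chaos_gamma_product_general P I2 c Γ κ hintΓ hintΓΓ hIso hRep hContr hκΓ hκc
end

section
/- Let G_n = I₂(f_n), f_n ∈ H^{⊙2}, and Z_α ~ N(0, α²) with α > 1. Then d₃(G_n, Z_α) ≤ (1/3)(κ₆(G_n)/120 + κ₃(G_n)²/4)^{1/2} + (1/2)|α² - κ₂(G_n)|. Consequently, if κ₂(G_n) → α² and κ₃(G_n) → 0, κ₆(G_n) → 0, then G_n converges in distribution to Z_α. -/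
open MeasureTheory ProbabilityTheory Filter

/-- The class `W_r` of `r`-times differentiable functions `h : ℝ → ℝ` with
`‖h^{(k)}‖_∞ ≤ 1` for `k = 0, 1, …, r`. -/
def smoothClass (r : ℕ) : Set (ℝ → ℝ) :=
  {h | (∀ k < r, Differentiable ℝ (iteratedDeriv k h)) ∧
    ∀ k ≤ r, ∀ x : ℝ, |iteratedDeriv k h x| ≤ 1}

/-- The smooth Wasserstein distance `d_r(Y, Z) = sup_{h ∈ W_r} |E h(Y) - E h(Z)|`. -/
noncomputable def dSmooth {Ω : Type*} [MeasurableSpace Ω] (P : Measure Ω)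
    (Y Z : Ω → ℝ) (r : ℕ) : ℝ :=
  sSup {d | ∃ h ∈ smoothClass r, d = |(∫ ω, h (Y ω) ∂P) - ∫ ω, h (Z ω) ∂P|}

/-! Both `G n` and the centred Gaussian `Z` have mean zero, so the assumed estimate on
`d₃(G n, Z)` reduces to `(1/3) E|Γ₃| + (1/2) |α² - κ₂|`, and Cauchy–Schwarz together with the
cumulant formula for `E Γ₃²` gives the bound. If the cumulants converge, the bound forces
`d₃(G n, Z) → 0`. For every `t`, the functions `x ↦ cos (t x)` and `x ↦ sin (t x)` lie in `W₃`
after division by `max 1 |t| ^ 3`, so the characteristic functions of `G n` converge to that of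
`Z`, and Lévy's continuity theorem yields convergence in distribution. -/

open scoped Topology

lemma mul_comp_mul_mem_smoothClass {r : ℕ} {f : ℝ → ℝ} (hf : ContDiff ℝ r f)
    (hbound : ∀ k x, |iteratedDeriv k f x| ≤ 1) (t : ℝ) :
    (fun x => (max 1 |t|)⁻¹ ^ r * f (t * x)) ∈ smoothClass r := by
  set m := max 1 |t|
  have hm : 1 ≤ m := le_max_left _ _
  have hderiv : ∀ k ≤ r, ∀ x, iteratedDeriv k (fun x => m⁻¹ ^ r * f (t * x)) x
      = m⁻¹ ^ r * (t ^ k * iteratedDeriv k f (t * x)) := fun k hk x => by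
    rw [iteratedDeriv_const_mul_field,
      iteratedDeriv_comp_const_mul (hf.of_le (by exact_mod_cast hk))]
  refine ⟨fun k _ => ?_, fun k hk x => ?_⟩
  · have hsmooth : ContDiff ℝ r (fun x => m⁻¹ ^ r * f (t * x)) :=
      contDiff_const.mul (hf.comp (contDiff_const.mul contDiff_id))
    exact hsmooth.differentiable_iteratedDeriv k (by exact_mod_cast ‹k < r›)
  have htk : |t| ^ k ≤ m ^ r :=
    (pow_le_pow_left₀ (abs_nonneg t) (le_max_right _ _) k).trans (pow_le_pow_right₀ hm hk)
  rw [hderiv k hk, abs_mul, abs_mul, abs_pow, abs_pow, abs_inv,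
    abs_of_pos (zero_lt_one.trans_le hm)]
  calc m⁻¹ ^ r * (|t| ^ k * |iteratedDeriv k f (t * x)|) ≤ m⁻¹ ^ r * (m ^ r * 1) := by
        gcongr
        exact hbound k _
    _ = 1 := by rw [mul_one, ← mul_pow, inv_mul_cancel₀ (by positivity), one_pow]

section

variable {Ω : Type*} [MeasurableSpace Ω] {P : Measure Ω}

lemma integral_abs_le_sqrt_integral_sq [IsProbabilityMeasure P] {f : Ω → ℝ} (hf : MemLp f 2 P) :
    ∫ ω, |f ω| ∂P ≤ √(∫ ω, f ω ^ 2 ∂P) := by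
  refine Real.le_sqrt_of_sq_le ?_
  have h := variance_nonneg |f| P
  rw [variance_eq_sub hf.abs] at h
  simpa [sq_abs] using h

lemma charFun_map_eq_integral_cos_add_integral_sin [IsFiniteMeasure P] {X : Ω → ℝ}
    (hX : AEMeasurable X P) (t : ℝ) :
    charFun (P.map X) t
      = ↑(∫ ω, Real.cos (t * X ω) ∂P) + ↑(∫ ω, Real.sin (t * X ω) ∂P) * Complex.I := by
  have hcos : Integrable (fun ω => (Real.cos (t * X ω) : ℂ)) P :=
    .of_bound (by fun_prop) 1 (ae_of_all _ fun ω => by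
      simpa only [Complex.norm_real, Real.norm_eq_abs] using Real.abs_cos_le_one _)
  have hsin : Integrable (fun ω => (Real.sin (t * X ω) : ℂ) * Complex.I) P :=
    .of_bound (by fun_prop) 1 (ae_of_all _ fun ω => by
      simpa only [norm_mul, Complex.norm_I, mul_one, Complex.norm_real, Real.norm_eq_abs]
        using Real.abs_sin_le_one _)
  rw [charFun_apply_real, integral_map hX (by fun_prop)]
  simp_rw [Complex.exp_mul_I, ← Complex.ofReal_mul, ← Complex.ofReal_cos, ← Complex.ofReal_sin]
  rw [integral_add hcos hsin, integral_mul_const, integral_complex_ofReal, integral_complex_ofReal]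

lemma dSmooth_nonneg (P : Measure Ω) (Y Z : Ω → ℝ) (r : ℕ) : 0 ≤ dSmooth P Y Z r :=
  Real.sSup_nonneg (by rintro _ ⟨h, -, rfl⟩; exact abs_nonneg _)

lemma abs_integral_sub_le_dSmooth [IsProbabilityMeasure P] {r : ℕ} {h : ℝ → ℝ}
    (hh : h ∈ smoothClass r) (Y Z : Ω → ℝ) :
    |(∫ ω, h (Y ω) ∂P) - ∫ ω, h (Z ω) ∂P| ≤ dSmooth P Y Z r := by
  refine le_csSup ⟨2, ?_⟩ ⟨h, hh, rfl⟩
  rintro _ ⟨g, hg, rfl⟩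
  have bound : ∀ W : Ω → ℝ, ‖∫ ω, g (W ω) ∂P‖ ≤ 1 := fun W => by
    simpa using norm_integral_le_of_norm_le_const (μ := P) (f := fun ω => g (W ω)) (C := 1)
      (ae_of_all _ fun ω => by simpa using hg.2 0 r.zero_le (W ω))
  calc _ ≤ ‖∫ ω, g (Y ω) ∂P‖ + ‖∫ ω, g (Z ω) ∂P‖ := abs_sub _ _
    _ ≤ 2 := by linarith [bound Y, bound Z]

lemma tendsto_integral_of_tendsto_dSmooth [IsProbabilityMeasure P] {ι : Type*} {l : Filter ι}
    {G : ι → Ω → ℝ} {Z : Ω → ℝ} {r : ℕ} (hd : Tendsto (fun i => dSmooth P (G i) Z r) l (𝓝 0))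
    {h : ℝ → ℝ} (hh : h ∈ smoothClass r) :
    Tendsto (fun i => ∫ ω, h (G i ω) ∂P) l (𝓝 (∫ ω, h (Z ω) ∂P)) := by
  rw [tendsto_iff_dist_tendsto_zero]
  exact squeeze_zero (fun _ => dist_nonneg)
    (fun i => (Real.dist_eq _ _).trans_le (abs_integral_sub_le_dSmooth hh _ _)) hd

lemma tendsto_integral_comp_mul_of_tendsto_dSmooth [IsProbabilityMeasure P] {ι : Type*}
    {l : Filter ι} {G : ι → Ω → ℝ} {Z : Ω → ℝ} {r : ℕ}
    (hd : Tendsto (fun i => dSmooth P (G i) Z r) l (𝓝 0)) {f : ℝ → ℝ} (hf : ContDiff ℝ r f)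
    (hbound : ∀ k x, |iteratedDeriv k f x| ≤ 1) (t : ℝ) :
    Tendsto (fun i => ∫ ω, f (t * G i ω) ∂P) l (𝓝 (∫ ω, f (t * Z ω) ∂P)) := by
  have hc : (max 1 |t|)⁻¹ ^ r ≠ 0 := by positivity
  have h := tendsto_integral_of_tendsto_dSmooth hd (mul_comp_mul_mem_smoothClass hf hbound t)
  simp only [integral_const_mul] at h
  simpa only [← mul_assoc, inv_mul_cancel₀ hc, one_mul] using h.const_mul ((max 1 |t|)⁻¹ ^ r)⁻¹

lemma tendstoInDistribution_of_tendsto_dSmooth [IsProbabilityMeasure P] {G : ℕ → Ω → ℝ}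
    {Z : Ω → ℝ} {r : ℕ} (hG : ∀ n, AEMeasurable (G n) P) (hZ : AEMeasurable Z P)
    (hd : Tendsto (fun n => dSmooth P (G n) Z r) atTop (𝓝 0)) :
    TendstoInDistribution G atTop Z (fun _ => P) P where
  forall_aemeasurable := hG
  aemeasurable_limit := hZ
  tendsto := by
    refine ProbabilityMeasure.tendsto_of_tendsto_charFun fun t => ?_
    simp only [ProbabilityMeasure.coe_mk, charFun_map_eq_integral_cos_add_integral_sin (hG _),
      charFun_map_eq_integral_cos_add_integral_sin hZ]
    have hcos := tendsto_integral_comp_mul_of_tendsto_dSmooth hd Real.contDiff_cos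
      Real.abs_iteratedDeriv_cos_le_one t
    have hsin := tendsto_integral_comp_mul_of_tendsto_dSmooth hd Real.contDiff_sin
      Real.abs_iteratedDeriv_sin_le_one t
    exact hcos.ofReal.add (hsin.ofReal.mul_const _)

end

lemma MeasureTheory.TendstoInDistribution.tendsto_integral_comp {Ω E ι : Type*}
    [MeasurableSpace Ω] [TopologicalSpace E] [MeasurableSpace E] [OpensMeasurableSpace E]
    {μ : ι → Measure Ω} [∀ i, IsProbabilityMeasure (μ i)] {P : Measure Ω} [IsProbabilityMeasure P]
    {l : Filter ι} {X : ι → Ω → E} {Z : Ω → E} (h : TendstoInDistribution X l Z μ P)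
    (f : BoundedContinuousFunction E ℝ) :
    Tendsto (fun i => ∫ ω, f (X i ω) ∂μ i) l (𝓝 (∫ ω, f (Z ω) ∂P)) := by
  have hf := ProbabilityMeasure.tendsto_iff_forall_integral_tendsto.1 h.tendsto f
  simp only [ProbabilityMeasure.coe_mk] at hf
  simpa [integral_map (h.forall_aemeasurable _) f.continuous.aestronglyMeasurable,
    integral_map h.aemeasurable_limit f.continuous.aestronglyMeasurable] using hf

theorem normal_approximation_second_chaos_general {Ω : Type*} [MeasurableSpace Ω]
    (P : Measure Ω) [IsProbabilityMeasure P]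
    (G : ℕ → Ω → ℝ) (hGmeas : ∀ n, Measurable (G n))
    (Z : Ω → ℝ) (hZmeas : Measurable Z)
    (α : ℝ)
    (hZlaw : P.map Z = gaussianReal 0 ((α ^ 2).toNNReal))
    (Γ₂ Γ₃ : ℕ → Ω → ℝ) (κ : ℕ → ℕ → ℝ)
    (hEG : ∀ n, ∫ ω, G n ω ∂P = 0)
    (hEΓ₂ : ∀ n, ∫ ω, Γ₂ n ω ∂P = κ n 2)
    (hΓ₃meas : ∀ n, AEStronglyMeasurable (Γ₃ n) P)
    (hΓ₃sqInt : ∀ n, Integrable (fun ω => (Γ₃ n ω) ^ 2) P)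
    (hΓ₃sq : ∀ n, ∫ ω, (Γ₃ n ω) ^ 2 ∂P = κ n 6 / 120 + (κ n 3) ^ 2 / 4)
    (hbase : ∀ n,
      dSmooth P (G n) Z 3
        ≤ (1 / 3) * ∫ ω, |Γ₃ n ω| ∂P
          + (1 / 2) * |α ^ 2 - ∫ ω, Γ₂ n ω ∂P|
          + |(∫ ω, Z ω ∂P) - ∫ ω, G n ω ∂P|) :
    (∀ n, dSmooth P (G n) Z 3
        ≤ (1 / 3) * Real.sqrt (κ n 6 / 120 + (κ n 3) ^ 2 / 4)
          + (1 / 2) * |α ^ 2 - κ n 2|) ∧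
    (Tendsto (fun n => κ n 2) atTop (nhds (α ^ 2)) →
      Tendsto (fun n => κ n 3) atTop (nhds 0) →
      Tendsto (fun n => κ n 6) atTop (nhds 0) →
      ∀ f : BoundedContinuousFunction ℝ ℝ,
        Tendsto (fun n => ∫ ω, f (G n ω) ∂P) atTop (nhds (∫ ω, f (Z ω) ∂P))) := by
  have hEZ : ∫ ω, Z ω ∂P = 0 := by
    have h := integral_map (μ := P) (f := fun x : ℝ => x) hZmeas.aemeasurable
      aestronglyMeasurable_id
    rwa [hZlaw, integral_id_gaussianReal, eq_comm] at h
  have bound : ∀ n, dSmooth P (G n) Z 3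
      ≤ (1 / 3) * √(κ n 6 / 120 + κ n 3 ^ 2 / 4) + (1 / 2) * |α ^ 2 - κ n 2| := fun n => by
    have hCS := integral_abs_le_sqrt_integral_sq
      ((memLp_two_iff_integrable_sq (hΓ₃meas n)).2 (hΓ₃sqInt n))
    have h := hbase n
    rw [hEG n, hEΓ₂ n, hEZ, sub_zero, abs_zero, add_zero] at h
    rw [← hΓ₃sq n]
    linarith
  refine ⟨bound, fun h2 h3 h6 => ?_⟩
  have hupper : Tendsto (fun n => (1 / 3) * √(κ n 6 / 120 + κ n 3 ^ 2 / 4)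
      + (1 / 2) * |α ^ 2 - κ n 2|) atTop (𝓝 0) := by
    convert ((((h6.div_const 120).add ((h3.pow 2).div_const 4)).sqrt).const_mul (1 / 3)).add
      (((tendsto_const_nhds (x := α ^ 2)).sub h2).abs.const_mul (1 / 2)) using 2
    simp
  have hd := squeeze_zero (fun n => dSmooth_nonneg P _ _ _) bound hupper
  exact (tendstoInDistribution_of_tendsto_dSmooth (fun n => (hGmeas n).aemeasurable)
    hZmeas.aemeasurable hd).tendsto_integral_comp

/-- **Normal approximation of second chaos elements and the associated limit theorem.**
For `G_n = I₂(f_n)` (so `E G_n = 0`, `E Γ₂(G_n) = κ₂(G_n)`) and `Z_α ~ N(0, α²)`, `α > 1`,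
using the bound `d₃(G, Z_α) ≤ (1/3)E|Γ₃(G)| + (1/2)|α² - E Γ₂(G)| + |E Z_α - E G|`, the
identity `E[Γ₃(G_n)²] = κ₆(G_n)/120 + κ₃(G_n)²/4` and Cauchy–Schwarz, one obtains
`d₃(G_n, Z_α) ≤ (1/3)(κ₆(G_n)/120 + κ₃(G_n)²/4)^{1/2} + (1/2)|α² - κ₂(G_n)|`; consequently if
`κ₂(G_n) → α²`, `κ₃(G_n) → 0` and `κ₆(G_n) → 0` then `G_n` converges in distribution to
`Z_α`. -/
theorem normal_approximation_second_chaos {Ω : Type*} [MeasurableSpace Ω]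
    (P : Measure Ω) [IsProbabilityMeasure P]
    (G : ℕ → Ω → ℝ) (hGmeas : ∀ n, Measurable (G n))
    (Z : Ω → ℝ) (hZmeas : Measurable Z)
    (α : ℝ) (hα : 1 < α)
    (hZlaw : P.map Z = gaussianReal 0 ((α ^ 2).toNNReal))
    (Γ₂ Γ₃ : ℕ → Ω → ℝ) (κ : ℕ → ℕ → ℝ)
    (hEG : ∀ n, ∫ ω, G n ω ∂P = 0)
    (hEΓ₂ : ∀ n, ∫ ω, Γ₂ n ω ∂P = κ n 2)
    (hΓ₃meas : ∀ n, AEStronglyMeasurable (Γ₃ n) P)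
    (hΓ₃sqInt : ∀ n, Integrable (fun ω => (Γ₃ n ω) ^ 2) P)
    (hΓ₃sq : ∀ n, ∫ ω, (Γ₃ n ω) ^ 2 ∂P = κ n 6 / 120 + (κ n 3) ^ 2 / 4)
    (hbase : ∀ n,
      dSmooth P (G n) Z 3
        ≤ (1 / 3) * ∫ ω, |Γ₃ n ω| ∂P
          + (1 / 2) * |α ^ 2 - ∫ ω, Γ₂ n ω ∂P|
          + |(∫ ω, Z ω ∂P) - ∫ ω, G n ω ∂P|) :
    (∀ n, dSmooth P (G n) Z 3
        ≤ (1 / 3) * Real.sqrt (κ n 6 / 120 + (κ n 3) ^ 2 / 4)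
          + (1 / 2) * |α ^ 2 - κ n 2|) ∧
    (Tendsto (fun n => κ n 2) atTop (nhds (α ^ 2)) →
      Tendsto (fun n => κ n 3) atTop (nhds 0) →
      Tendsto (fun n => κ n 6) atTop (nhds 0) →
      ∀ f : BoundedContinuousFunction ℝ ℝ,
        Tendsto (fun n => ∫ ω, f (G n ω) ∂P) atTop (nhds (∫ ω, f (Z ω) ∂P))) :=
  normal_approximation_second_chaos_general P G hGmeas Z hZmeas α hZlaw Γ₂ Γ₃ κ hEG hEΓ₂ hΓ₃meas
    hΓ₃sqInt hΓ₃sq hbase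
end
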